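/- arXiv:1504.07658 — 3 statements merged into one kernel-verified Lean document; each statement's English description precedes it below -/
import Mathlib

section
/- Assume c ≠ 0 and hypothesis (R-H): A > 0, A(B−E) > C−E(b₁+b₂), D > Eb₁b₂, and (C−E(b₁+b₂))·(A(B−E)−C+E(b₁+b₂)) > A²(D−Eb₁b₂). Suppose the auxiliary quartic h has at least one positive real root, let Ω = {ω > 0 : h(ω²) = 0} (a finite nonempty set), and let τ₀ = min{τ^{(0)}(ω) : ω ∈ Ω}, where τ^{(0)}(ω) = arccos(b*(ω))/(2ω) if a*(ω) ≥ 0 and τ^{(0)}(ω) = (2π − arccos b*(ω))/(2ω) if a*(ω) < 0. Then for every delay τ with 0 ≤ τ < τ₀, every complex root λ of P(λ) = 0 satisfies Re λ < 0. -/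
noncomputable section

/-- Coefficient A = b₁+b₂−2a -/
def cA (a b₁ b₂ : ℝ) : ℝ := b₁ + b₂ - 2*a
/-- Coefficient B = b₁b₂−2a(b₁+b₂)+a²+2 -/
def cB (a b₁ b₂ : ℝ) : ℝ := b₁*b₂ - 2*a*(b₁+b₂) + a^2 + 2
/-- Coefficient C = (a²+1)(b₁+b₂)−2ab₁b₂−2a -/
def cC (a b₁ b₂ : ℝ) : ℝ := (a^2+1)*(b₁+b₂) - 2*a*b₁*b₂ - 2*a
/-- Coefficient D = a²b₁b₂−a(b₁+b₂)+1 -/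
def cD (a b₁ b₂ : ℝ) : ℝ := a^2*b₁*b₂ - a*(b₁+b₂) + 1
/-- Coefficient E = c² -/
def cE (c : ℝ) : ℝ := c^2
/-- P̂ = A²−2B -/
def qP (a b₁ b₂ c : ℝ) : ℝ := (cA a b₁ b₂)^2 - 2*(cB a b₁ b₂)
/-- Q̂ = B²+2D−2AC−E² -/
def qQ (a b₁ b₂ c : ℝ) : ℝ :=
  (cB a b₁ b₂)^2 + 2*(cD a b₁ b₂) - 2*(cA a b₁ b₂)*(cC a b₁ b₂) - (cE c)^2
/-- R̂ = C²−2BD−E²(b₁²+b₂²) -/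
def qR (a b₁ b₂ c : ℝ) : ℝ :=
  (cC a b₁ b₂)^2 - 2*(cB a b₁ b₂)*(cD a b₁ b₂) - (cE c)^2*(b₁^2+b₂^2)
/-- Ŝ = D²−E²(b₁b₂)² -/
def qS (a b₁ b₂ c : ℝ) : ℝ := (cD a b₁ b₂)^2 - (cE c)^2*(b₁*b₂)^2
/-- Auxiliary quartic h(z) = z⁴+P̂z³+Q̂z²+R̂z+Ŝ -/
def hq (a b₁ b₂ c z : ℝ) : ℝ :=
  z^4 + qP a b₁ b₂ c * z^3 + qQ a b₁ b₂ c * z^2 + qR a b₁ b₂ c * z + qS a b₁ b₂ c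
/-- Derivative h′(z) = 4z³+3P̂z²+2Q̂z+R̂ -/
def hq' (a b₁ b₂ c z : ℝ) : ℝ :=
  4*z^3 + 3*qP a b₁ b₂ c * z^2 + 2*qQ a b₁ b₂ c * z + qR a b₁ b₂ c
/-- Characteristic function P(λ) = λ⁴+Aλ³+Bλ²+Cλ+D − E(λ+b₁)(λ+b₂)e^{−2λτ} -/
def charP (a b₁ b₂ c τ : ℝ) (z : ℂ) : ℂ :=
  z^4 + (cA a b₁ b₂ : ℂ)*z^3 + (cB a b₁ b₂ : ℂ)*z^2 + (cC a b₁ b₂ : ℂ)*z + (cD a b₁ b₂ : ℂ)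
    - (cE c : ℂ) * (z + (b₁:ℂ)) * (z + (b₂:ℂ)) * Complex.exp (-(2*z*(τ:ℂ)))
/-- Denominator N(ω) = E[(b₁+b₂)²ω² + (ω²−b₁b₂)²] -/
def Nden (a b₁ b₂ c ω : ℝ) : ℝ := cE c * ((b₁+b₂)^2*ω^2 + (ω^2 - b₁*b₂)^2)
/-- a*(ω) -/
def astar (a b₁ b₂ c ω : ℝ) : ℝ :=
  ((ω^4 - cB a b₁ b₂ * ω^2 + cD a b₁ b₂)*(b₁+b₂)*ω
    + (cA a b₁ b₂ * ω^3 - cC a b₁ b₂ * ω)*(b₁*b₂ - ω^2)) / Nden a b₁ b₂ c ω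
/-- b*(ω) -/
def bstar (a b₁ b₂ c ω : ℝ) : ℝ :=
  ((ω^4 - cB a b₁ b₂ * ω^2 + cD a b₁ b₂)*(b₁*b₂ - ω^2)
    + (-(cA a b₁ b₂) * ω^3 + cC a b₁ b₂ * ω)*(b₁+b₂)*ω) / Nden a b₁ b₂ c ω
/-- The critical delays τ^{(j)}(ω). -/
def tauJ (a b₁ b₂ c ω : ℝ) (j : ℕ) : ℝ :=
  if 0 ≤ astar a b₁ b₂ c ω then
    (Real.arccos (bstar a b₁ b₂ c ω) + 2*j*Real.pi) / (2*ω)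
  else
    (2*Real.pi - Real.arccos (bstar a b₁ b₂ c ω) + 2*j*Real.pi) / (2*ω)


/-! At delay `0` the characteristic function is a real quartic satisfying the Routh–Hurwitz
conditions, so all its roots lie in the open left half-plane. Roots in the closed right half-plane
stay bounded, and by Hurwitz's theorem a root persists under uniformly small holomorphic
perturbations, so the smallest delay with such a root would carry a root on the imaginary axis.
A root `ω * I` with `ω > 0` forces `h(ω²) = 0`, `cos (2ωτ) = b*(ω)` and `sin (2ωτ) = a*(ω)`,
whence `τ ≥ τ⁽⁰⁾(ω) ≥ τ₀`. -/

open Set Filter Metric Topology Complex ComplexConjugate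
open scoped Real

theorem exists_mem_closedBall_eq_zero {g : ℂ → ℂ} {z₀ : ℂ} {r m : ℝ}
    (hg : DiffContOnCl ℂ g (ball z₀ r)) (hr : 0 < r)
    (hsphere : ∀ z ∈ sphere z₀ r, m ≤ ‖g z‖) (hcenter : ‖g z₀‖ < m) :
    ∃ z ∈ closedBall z₀ r, g z = 0 := by
  by_contra! hne
  rw [← closure_ball z₀ hr.ne'] at hne
  have hm : 0 < m := (norm_nonneg _).trans_lt hcenter
  have hmax : ‖(g z₀)⁻¹‖ ≤ m⁻¹ := by
    refine norm_le_of_forall_mem_frontier_norm_le isBounded_ball (hg.inv hne) (fun z hz => ?_)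
      (subset_closure (mem_ball_self hr))
    rw [frontier_ball z₀ hr.ne'] at hz
    rw [Pi.inv_apply, norm_inv]
    exact inv_anti₀ hm (hsphere z hz)
  rw [norm_inv, inv_le_inv₀ (norm_pos_iff.2 (hne z₀ (subset_closure (mem_ball_self hr)))) hm]
    at hmax
  exact hmax.not_gt hcenter

theorem exists_sphere_le_norm {f : ℂ → ℂ} (hf : Differentiable ℂ f) {z₀ w : ℂ} (hw : f w ≠ 0)
    {ε : ℝ} (hε : 0 < ε) : ∃ r ∈ Ioc 0 ε, ∃ m > 0, ∀ z ∈ sphere z₀ r, m ≤ ‖f z‖ := by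
  rcases (hf.analyticAt z₀).eventually_eq_zero_or_eventually_ne_zero with hzero | hne
  · exact absurd ((hf.differentiableOn.analyticOnNhd isOpen_univ)
      |>.eqOn_zero_of_preconnected_of_eventuallyEq_zero isPreconnected_univ (mem_univ z₀) hzero
      (mem_univ w)) hw
  obtain ⟨δ, hδ, hball⟩ := Metric.eventually_nhds_iff_ball.1 (eventually_nhdsWithin_iff.1 hne)
  set r := min (δ / 2) ε
  have hr : 0 < r := by positivity
  have hsphere : ∀ z ∈ sphere z₀ r, f z ≠ 0 := fun z hz => by
    refine hball _ ?_ (ne_of_mem_sphere hz hr.ne')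
    rw [mem_sphere] at hz
    rw [mem_ball, hz]
    linarith [min_le_left (δ / 2) ε]
  obtain ⟨z₁, hz₁, hmin⟩ := (isCompact_sphere z₀ r).exists_isMinOn
    (NormedSpace.sphere_nonempty.2 hr.le) hf.continuous.norm.continuousOn
  exact ⟨r, ⟨hr, min_le_right _ _⟩, ‖f z₁‖, norm_pos_iff.2 (hsphere z₁ hz₁), fun z hz => hmin hz⟩

theorem exists_radius_forall_close_exists_zero {f : ℂ → ℂ} (hf : Differentiable ℂ f)
    {z₀ w : ℂ} (hz₀ : f z₀ = 0) (hw : f w ≠ 0) {ε : ℝ} (hε : 0 < ε) :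
    ∃ r ∈ Ioc 0 ε, ∃ m > 0, ∀ g : ℂ → ℂ, Differentiable ℂ g →
      (∀ z ∈ closedBall z₀ r, dist (g z) (f z) < m) → ∃ z ∈ closedBall z₀ r, g z = 0 := by
  obtain ⟨r, hr, m, hm, hsphere⟩ := exists_sphere_le_norm (z₀ := z₀) hf hw hε
  refine ⟨r, hr, m / 2, half_pos hm, fun g hg hclose => ?_⟩
  refine exists_mem_closedBall_eq_zero (m := m / 2) hg.diffContOnCl hr.1 (fun z hz => ?_) ?_
  · have hgf := hclose z (sphere_subset_closedBall hz)
    rw [dist_comm, dist_eq_norm] at hgf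
    linarith [hsphere z hz, norm_sub_norm_le (f z) (g z)]
  · simpa [hz₀, dist_eq_norm] using hclose z₀ (mem_closedBall_self hr.1.le)

theorem re_neg_of_forall_ofReal_mul_I_ne_zero (F : ℝ → ℂ → ℂ)
    (hF : Continuous (Function.uncurry F)) (hFd : ∀ s, Differentiable ℂ (F s)) {τ M : ℝ}
    (hτ : 0 ≤ τ) (hbound : ∀ s ∈ Icc 0 τ, ∀ z, 0 ≤ z.re → F s z = 0 → ‖z‖ ≤ M)
    (hstable : ∀ z, F 0 z = 0 → z.re < 0) (himag : ∀ s ∈ Icc 0 τ, ∀ y : ℝ, F s (y * I) ≠ 0) :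
    ∀ z, F τ z = 0 → z.re < 0 := by
  intro z hz
  by_contra! hzre
  set Z : Set (ℝ × ℂ) := (Icc 0 τ ×ˢ {w | 0 ≤ w.re}) ∩ Function.uncurry F ⁻¹' {0}
  have hZ : IsCompact Z := by
    refine ((isCompact_Icc (a := (0 : ℝ)) (b := τ)).prod (isCompact_closedBall 0 M))
      |>.of_isClosed_subset ((isClosed_Icc.prod (isClosed_le continuous_const continuous_re)).inter
        (isClosed_singleton.preimage hF)) ?_
    rintro ⟨s, w⟩ ⟨⟨hs, hw⟩, hFw⟩
    exact ⟨hs, mem_closedBall_zero_iff.2 (hbound s hs w hw hFw)⟩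
  obtain ⟨T, ⟨⟨T, μ⟩, ⟨⟨hT, hμre⟩, hμ⟩, rfl⟩, hTmin⟩ :=
    (hZ.image continuous_fst).exists_isLeast ⟨τ, (τ, z), ⟨⟨⟨hτ, le_rfl⟩, hzre⟩, hz⟩, rfl⟩
  simp only [mem_preimage, Function.uncurry_apply_pair, mem_singleton_iff] at hμ
  have hμre : 0 < μ.re := by
    refine hμre.lt_of_ne' fun h => himag T hT μ.im ?_
    rwa [show (μ.im : ℂ) * I = μ by apply Complex.ext <;> simp [h]]
  have hTpos : 0 < T := hT.1.lt_of_ne' fun h => (hstable μ (h ▸ hμ)).not_ge hμre.le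
  have hfar : F T ((|M| + 1 : ℝ) : ℂ) ≠ 0 := fun h => by
    have := hbound T hT _ (by rw [ofReal_re]; positivity) h
    rw [norm_real, Real.norm_of_nonneg (by positivity)] at this
    linarith [le_abs_self M]
  obtain ⟨r, ⟨-, hrμ⟩, m, hm, hpersist⟩ :=
    exists_radius_forall_close_exists_zero (hFd T) hμ hfar (half_pos hμre)
  obtain ⟨v, hv, hclose⟩ := (isCompact_closedBall μ r).mem_uniformity_of_prod
    hF.continuousOn (mem_univ T) (dist_mem_uniformity hm)
  obtain ⟨t, ⟨htpos, htT⟩, htv⟩ :=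
    Filter.nonempty_of_mem (inter_mem (Ioo_mem_nhdsLT hTpos)
      (mem_nhdsWithin_of_mem_nhds (nhdsWithin_univ T ▸ hv)))
  obtain ⟨w, hw, hFw⟩ := hpersist (F t) (hFd t) (hclose t htv)
  have hwre : 0 ≤ w.re := by
    have := (abs_re_le_norm (w - μ)).trans (mem_closedBall_iff_norm.1 hw)
    rw [sub_re, abs_le] at this
    linarith
  exact htT.not_ge (hTmin ⟨(t, w), ⟨⟨⟨htpos.le, htT.le.trans hT.2⟩, hwre⟩, hFw⟩, rfl⟩)

theorem re_neg_of_quartic_eq_zero {A B C D : ℝ} (hA : 0 < A) (hAB : C < A * B) (hD : 0 < D)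
    (hRH : A ^ 2 * D < C * (A * B - C)) {z : ℂ}
    (hz : z ^ 4 + A * z ^ 3 + B * z ^ 2 + C * z + D = 0) : z.re < 0 := by
  by_contra! hx
  have hC : 0 < C := by nlinarith [mul_pos (pow_pos hA 2) hD]
  have hB : 0 < B := by nlinarith
  obtain ⟨x, y⟩ := z
  have hre := congrArg re hz
  have him := congrArg im hz
  simp only [pow_succ, pow_zero, one_mul, add_re, add_im, mul_re, mul_im, ofReal_re, ofReal_im,
    zero_re, zero_im] at hre him hx
  rcases eq_or_ne y 0 with rfl | hy
  · nlinarith [pow_nonneg hx 3, pow_nonneg hx 4]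
  have hy2 : (4 * x + A) * y ^ 2 = 4 * x ^ 3 + 3 * A * x ^ 2 + 2 * B * x + C := by
    apply mul_left_cancel₀ hy
    linear_combination -him
  -- eliminating `y ^ 2` between the real part and `hy2` leaves a sextic in `x`
  have hsextic : 64 * x ^ 6 + 96 * A * x ^ 5 + (48 * A ^ 2 + 32 * B) * x ^ 4
      + (8 * A ^ 3 + 32 * A * B) * x ^ 3 + (4 * B ^ 2 + 4 * A * C + 8 * A ^ 2 * B - 16 * D) * x ^ 2
      + (2 * A * B ^ 2 + 2 * A ^ 2 * C - 8 * A * D) * x + (A * B * C - C ^ 2 - A ^ 2 * D) = 0 := by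
    linear_combination (-(4 * x + A) ^ 2) * hre
      + (-6 * x ^ 2 * (4 * x + A) + (4 * x + A) * y ^ 2
        + (4 * x ^ 3 + 3 * A * x ^ 2 + 2 * B * x + C) - 3 * A * x * (4 * x + A)
        - B * (4 * x + A)) * hy2
  have h4D : 4 * D < B ^ 2 + A * C := by
    nlinarith [sq_nonneg (A * B - 2 * C), pow_pos hA 3, mul_pos hA hC]
  have hx2 : 0 ≤ (4 * B ^ 2 + 4 * A * C + 8 * A ^ 2 * B - 16 * D) * x ^ 2 :=
    mul_nonneg (by nlinarith [mul_pos (mul_pos hA hA) hB]) (sq_nonneg x)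
  have hx1 : 0 ≤ (2 * A * B ^ 2 + 2 * A ^ 2 * C - 8 * A * D) * x :=
    mul_nonneg (by nlinarith) hx
  have hx3 : 0 ≤ (8 * A ^ 3 + 32 * A * B) * x ^ 3 := by positivity
  have hx4 : 0 ≤ (48 * A ^ 2 + 32 * B) * x ^ 4 := by positivity
  have hx5 : 0 ≤ 96 * A * x ^ 5 := by positivity
  nlinarith [pow_nonneg hx 6]

theorem le_max_one_of_pow_four_le {r α β γ δ : ℝ} (hβ : 0 ≤ β) (hγ : 0 ≤ γ) (hδ : 0 ≤ δ)
    (h : r ^ 4 ≤ α * r ^ 3 + β * r ^ 2 + γ * r + δ) : r ≤ max 1 (α + β + γ + δ) := by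
  rcases le_or_gt r 1 with hr | hr
  · exact le_max_of_le_left hr
  refine le_max_of_le_right (le_of_mul_le_mul_right ?_ (pow_pos (zero_lt_one.trans hr) 3))
  have h1 : r ≤ r ^ 3 := by nlinarith
  have h2 : r ^ 2 ≤ r ^ 3 := by nlinarith
  have h3 : 1 ≤ r ^ 3 := by nlinarith
  nlinarith [mul_le_mul_of_nonneg_left h1 hγ, mul_le_mul_of_nonneg_left h2 hβ,
    mul_le_mul_of_nonneg_left h3 hδ]

theorem norm_exp_neg_two_mul_le_one {z : ℂ} {t : ℝ} (hz : 0 ≤ z.re) (ht : 0 ≤ t) :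
    ‖exp (-(2 * z * t))‖ ≤ 1 := by
  rw [norm_exp, Real.exp_le_one_iff]
  simp only [neg_re, mul_re, re_ofNat, im_ofNat, ofReal_re, ofReal_im]
  nlinarith

theorem principal_angle_le {θ : ℝ} (hθ : 0 ≤ θ) :
    (if 0 ≤ Real.sin θ then Real.arccos (Real.cos θ) else 2 * π - Real.arccos (Real.cos θ))
      ≤ θ := by
  split_ifs with hsin
  · rcases le_or_gt θ π with h | h
    · rw [Real.arccos_cos hθ h]
    · linarith [Real.arccos_le_pi (Real.cos θ)]
  · have hπ : π < θ := by
      by_contra! h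
      exact hsin (Real.sin_nonneg_of_nonneg_of_le_pi hθ h)
    rcases le_or_gt θ (2 * π) with h | h
    · rw [← Real.cos_two_pi_sub, Real.arccos_cos (by linarith) (by linarith)]
      linarith
    · linarith [Real.arccos_nonneg (Real.cos θ)]

theorem continuous_charP (a b₁ b₂ c : ℝ) : Continuous (Function.uncurry (charP a b₁ b₂ c)) := by
  unfold charP Function.uncurry
  fun_prop

theorem differentiable_charP (a b₁ b₂ c τ : ℝ) : Differentiable ℂ (charP a b₁ b₂ c τ) := by
  unfold charP
  fun_prop

theorem charP_conj (a b₁ b₂ c τ : ℝ) (z : ℂ) :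
    charP a b₁ b₂ c τ (conj z) = conj (charP a b₁ b₂ c τ z) := by
  simp only [charP, map_add, map_sub, map_mul, map_pow, map_neg, map_ofNat, conj_ofReal,
    ← exp_conj]

theorem exists_norm_le_of_charP_eq_zero (a b₁ b₂ c : ℝ) :
    ∃ M, ∀ t, 0 ≤ t → ∀ z : ℂ, 0 ≤ z.re → charP a b₁ b₂ c t z = 0 → ‖z‖ ≤ M := by
  set A := cA a b₁ b₂
  set B := cB a b₁ b₂
  set C := cC a b₁ b₂
  set D := cD a b₁ b₂
  set E := cE c
  have hE : 0 ≤ E := sq_nonneg c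
  refine ⟨max 1 (|A| + (|B| + E) + (|C| + E * (|b₁| + |b₂|)) + (|D| + E * (|b₁| * |b₂|))),
    fun t ht z hz h => le_max_one_of_pow_four_le (by positivity) (by positivity) (by positivity) ?_⟩
  have h4 : z ^ 4 = E * (z + b₁) * (z + b₂) * exp (-(2 * z * t))
      - A * z ^ 3 - B * z ^ 2 - C * z - D := by
    rw [charP] at h
    linear_combination h
  have hb₁ : ‖z + b₁‖ ≤ ‖z‖ + |b₁| := (norm_add_le _ _).trans_eq (by rw [norm_real]; rfl)
  have hb₂ : ‖z + b₂‖ ≤ ‖z‖ + |b₂| := (norm_add_le _ _).trans_eq (by rw [norm_real]; rfl)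
  calc ‖z‖ ^ 4 = ‖E * (z + b₁) * (z + b₂) * exp (-(2 * z * t))
        - A * z ^ 3 - B * z ^ 2 - C * z - D‖ := by rw [← norm_pow, h4]
    _ ≤ ‖E * (z + b₁) * (z + b₂) * exp (-(2 * z * t))‖
        + ‖A * z ^ 3‖ + ‖B * z ^ 2‖ + ‖C * z‖ + ‖(D : ℂ)‖ := by
      refine (norm_sub_le _ _).trans ?_
      gcongr
      refine (norm_sub_le _ _).trans ?_
      gcongr
      exact (norm_sub_le _ _).trans (by gcongr; exact norm_sub_le _ _)
    _ ≤ E * (‖z‖ + |b₁|) * (‖z‖ + |b₂|) * 1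
        + |A| * ‖z‖ ^ 3 + |B| * ‖z‖ ^ 2 + |C| * ‖z‖ + |D| := by
      simp only [norm_mul, norm_pow, norm_real, Real.norm_eq_abs, abs_of_nonneg hE]
      gcongr
      exact norm_exp_neg_two_mul_le_one hz ht
    _ = _ := by ring

theorem charP_zero_delay (a b₁ b₂ c : ℝ) (z : ℂ) :
    charP a b₁ b₂ c 0 z = z ^ 4 + cA a b₁ b₂ * z ^ 3 + ((cB a b₁ b₂ - cE c : ℝ) : ℂ) * z ^ 2
      + ((cC a b₁ b₂ - cE c * (b₁ + b₂) : ℝ) : ℂ) * z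
      + ((cD a b₁ b₂ - cE c * b₁ * b₂ : ℝ) : ℂ) := by
  simp only [charP, ofReal_zero, mul_zero, neg_zero, exp_zero]
  push_cast
  ring

theorem re_neg_of_charP_zero_delay_eq_zero {a b₁ b₂ c : ℝ}
    (RH1 : 0 < cA a b₁ b₂)
    (RH2 : cC a b₁ b₂ - cE c * (b₁+b₂) < cA a b₁ b₂ * (cB a b₁ b₂ - cE c))
    (RH3 : cE c * b₁ * b₂ < cD a b₁ b₂)
    (RH4 : (cA a b₁ b₂)^2 * (cD a b₁ b₂ - cE c * b₁ * b₂) <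
      (cC a b₁ b₂ - cE c * (b₁+b₂)) *
        (cA a b₁ b₂ * (cB a b₁ b₂ - cE c) - cC a b₁ b₂ + cE c * (b₁+b₂)))
    {z : ℂ} (h : charP a b₁ b₂ c 0 z = 0) : z.re < 0 := by
  rw [charP_zero_delay] at h
  exact re_neg_of_quartic_eq_zero RH1 RH2 (sub_pos.2 RH3) (by linear_combination RH4) h

theorem charP_ofReal_mul_I_eq_zero {a b₁ b₂ c t y : ℝ} (h : charP a b₁ b₂ c t (y * I) = 0) :
    y ^ 4 - cB a b₁ b₂ * y ^ 2 + cD a b₁ b₂ = cE c * ((b₁ * b₂ - y ^ 2) * Real.cos (2 * y * t)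
        + (b₁ + b₂) * y * Real.sin (2 * y * t)) ∧
      cC a b₁ b₂ * y - cA a b₁ b₂ * y ^ 3 = cE c * ((b₁ + b₂) * y * Real.cos (2 * y * t)
        - (b₁ * b₂ - y ^ 2) * Real.sin (2 * y * t)) := by
  have hexp : exp (-(2 * (y * I) * t)) = Real.cos (2 * y * t) - Real.sin (2 * y * t) * I := by
    rw [show -(2 * (y * I) * t) = ((-(2 * y * t) : ℝ) : ℂ) * I by push_cast; ring, exp_mul_I,
      ← ofReal_cos, ← ofReal_sin, Real.cos_neg, Real.sin_neg, ofReal_neg]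
    ring
  rw [charP, hexp] at h
  have hre := congrArg re h
  have him := congrArg im h
  simp only [pow_succ, pow_zero, one_mul, add_re, add_im, sub_re, sub_im, mul_re, mul_im,
    ofReal_re, ofReal_im, I_re, I_im, zero_re, zero_im] at hre him
  exact ⟨by linear_combination hre, by linear_combination him⟩

-- `h(ω²) = |Q(ωi)|² - E² |(ωi + b₁)(ωi + b₂)|²`, where `Q` is the delay-free quartic part
theorem hq_sq_eq (a b₁ b₂ c y : ℝ) : hq a b₁ b₂ c (y ^ 2) =
    (y ^ 4 - cB a b₁ b₂ * y ^ 2 + cD a b₁ b₂) ^ 2 + (cC a b₁ b₂ * y - cA a b₁ b₂ * y ^ 3) ^ 2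
      - cE c ^ 2 * ((b₁ * b₂ - y ^ 2) ^ 2 + ((b₁ + b₂) * y) ^ 2) := by
  simp only [hq, qP, qQ, qR, qS]
  ring

theorem Nden_pos {a b₁ b₂ c y : ℝ} (hc : c ≠ 0) (hy : y ≠ 0) : 0 < Nden a b₁ b₂ c y := by
  refine mul_pos (sq_pos_of_ne_zero hc) ?_
  rcases eq_or_ne (b₁ + b₂) 0 with h | h
  · have hb : b₁ * b₂ = -b₁ ^ 2 := by rw [eq_neg_of_add_eq_zero_right h]; ring
    rw [hb]
    nlinarith [pow_pos (sq_pos_of_ne_zero hy) 2, sq_nonneg b₁]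
  · have := sq_pos_of_ne_zero h
    have := sq_pos_of_ne_zero hy
    positivity

theorem tauJ_zero (a b₁ b₂ c ω : ℝ) : tauJ a b₁ b₂ c ω 0 =
    (if 0 ≤ astar a b₁ b₂ c ω then Real.arccos (bstar a b₁ b₂ c ω)
      else 2 * π - Real.arccos (bstar a b₁ b₂ c ω)) / (2 * ω) := by
  unfold tauJ
  split_ifs <;> simp

theorem tauJ_nonneg (a b₁ b₂ c : ℝ) {ω : ℝ} (hω : 0 < ω) (j : ℕ) : 0 ≤ tauJ a b₁ b₂ c ω j := by
  have := Real.arccos_nonneg (bstar a b₁ b₂ c ω)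
  have := Real.arccos_le_pi (bstar a b₁ b₂ c ω)
  unfold tauJ
  split_ifs <;> apply div_nonneg _ (by positivity) <;> nlinarith [Real.pi_pos]

theorem hq_eq_zero_and_tauJ_le {a b₁ b₂ c t y : ℝ} (hc : c ≠ 0) (hy : 0 < y) (ht : 0 ≤ t)
    (h : charP a b₁ b₂ c t (y * I) = 0) : hq a b₁ b₂ c (y ^ 2) = 0 ∧ tauJ a b₁ b₂ c y 0 ≤ t := by
  obtain ⟨hre, him⟩ := charP_ofReal_mul_I_eq_zero h
  have hN := Nden_pos (a := a) (b₁ := b₁) (b₂ := b₂) hc hy.ne'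
  have hcos : bstar a b₁ b₂ c y = Real.cos (2 * y * t) := by
    rw [bstar, div_eq_iff hN.ne', Nden]
    linear_combination (b₁ * b₂ - y ^ 2) * hre + ((b₁ + b₂) * y) * him
  have hsin : astar a b₁ b₂ c y = Real.sin (2 * y * t) := by
    rw [astar, div_eq_iff hN.ne', Nden]
    linear_combination ((b₁ + b₂) * y) * hre - (b₁ * b₂ - y ^ 2) * him
  constructor
  · rw [hq_sq_eq, hre, him]
    linear_combination cE c ^ 2 * ((b₁ * b₂ - y ^ 2) ^ 2 + ((b₁ + b₂) * y) ^ 2)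
      * Real.sin_sq_add_cos_sq (2 * y * t)
  · rw [tauJ_zero, hcos, hsin, div_le_iff₀ (by positivity)]
    linarith [principal_angle_le (by positivity : 0 ≤ 2 * y * t)]

theorem charP_ofReal_mul_I_ne_zero {a b₁ b₂ c t : ℝ} (hc : c ≠ 0)
    (RH3 : cE c * b₁ * b₂ < cD a b₁ b₂) (ht : 0 ≤ t)
    (htτ₀ : t < sInf ((fun ω => tauJ a b₁ b₂ c ω 0) '' {ω : ℝ | 0 < ω ∧ hq a b₁ b₂ c (ω^2) = 0}))
    (y : ℝ) : charP a b₁ b₂ c t (y * I) ≠ 0 := by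
  intro h
  wlog hy : 0 < y generalizing y
  · rcases (not_lt.1 hy).lt_or_eq with hy | rfl
    · refine this (-y) ?_ (neg_pos.2 hy)
      rw [show ((-y : ℝ) : ℂ) * I = conj (y * I) by simp, charP_conj, h, map_zero]
    · simp [charP] at h
      exact (sub_pos.2 RH3).ne' (by exact_mod_cast h)
  obtain ⟨hroot, hle⟩ := hq_eq_zero_and_tauJ_le hc hy ht h
  have hbdd : BddBelow
      ((fun ω => tauJ a b₁ b₂ c ω 0) '' {ω : ℝ | 0 < ω ∧ hq a b₁ b₂ c (ω^2) = 0}) :=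
    ⟨0, by rintro _ ⟨ω, hω, rfl⟩; exact tauJ_nonneg a b₁ b₂ c hω.1 0⟩
  exact htτ₀.not_ge ((csInf_le hbdd ⟨y, ⟨hy, hroot⟩, rfl⟩).trans hle)

theorem stmt_9_general (a b₁ b₂ c : ℝ)
    (hc : c ≠ 0)
    (RH1 : 0 < cA a b₁ b₂)
    (RH2 : cC a b₁ b₂ - cE c * (b₁+b₂) < cA a b₁ b₂ * (cB a b₁ b₂ - cE c))
    (RH3 : cE c * b₁ * b₂ < cD a b₁ b₂)
    (RH4 : (cA a b₁ b₂)^2 * (cD a b₁ b₂ - cE c * b₁ * b₂) <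
      (cC a b₁ b₂ - cE c * (b₁+b₂)) *
        (cA a b₁ b₂ * (cB a b₁ b₂ - cE c) - cC a b₁ b₂ + cE c * (b₁+b₂)))
    (τ₀ : ℝ)
    (hτ₀ : τ₀ = sInf ((fun ω => tauJ a b₁ b₂ c ω 0) ''
      {ω : ℝ | 0 < ω ∧ hq a b₁ b₂ c (ω^2) = 0})) :
    ∀ τ : ℝ, 0 ≤ τ → τ < τ₀ → ∀ z : ℂ, charP a b₁ b₂ c τ z = 0 → z.re < 0 := by
  intro τ hτ hττ₀
  obtain ⟨M, hM⟩ := exists_norm_le_of_charP_eq_zero a b₁ b₂ c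
  exact re_neg_of_forall_ofReal_mul_I_ne_zero (charP a b₁ b₂ c) (continuous_charP a b₁ b₂ c)
    (differentiable_charP a b₁ b₂ c) hτ (fun s hs => hM s hs.1)
    (fun _ => re_neg_of_charP_zero_delay_eq_zero RH1 RH2 RH3 RH4)
    (fun s hs => charP_ofReal_mul_I_ne_zero hc RH3 hs.1 (hτ₀ ▸ hs.2.trans_lt hττ₀))

theorem stmt_9 (a b₁ b₂ c : ℝ) (ha : 0 < a) (hb₁ : 0 < b₁) (hb₂ : 0 < b₂)
    (hc : c ≠ 0)
    (RH1 : 0 < cA a b₁ b₂)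
    (RH2 : cC a b₁ b₂ - cE c * (b₁+b₂) < cA a b₁ b₂ * (cB a b₁ b₂ - cE c))
    (RH3 : cE c * b₁ * b₂ < cD a b₁ b₂)
    (RH4 : (cA a b₁ b₂)^2 * (cD a b₁ b₂ - cE c * b₁ * b₂) <
      (cC a b₁ b₂ - cE c * (b₁+b₂)) *
        (cA a b₁ b₂ * (cB a b₁ b₂ - cE c) - cC a b₁ b₂ + cE c * (b₁+b₂)))
    (hroot : ∃ z : ℝ, 0 < z ∧ hq a b₁ b₂ c z = 0)
    (τ₀ : ℝ)
    (hτ₀ : τ₀ = sInf ((fun ω => tauJ a b₁ b₂ c ω 0) ''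
      {ω : ℝ | 0 < ω ∧ hq a b₁ b₂ c (ω^2) = 0})) :
    ∀ τ : ℝ, 0 ≤ τ → τ < τ₀ → ∀ z : ℂ, charP a b₁ b₂ c τ z = 0 → z.re < 0 :=
  stmt_9_general a b₁ b₂ c hc RH1 RH2 RH3 RH4 τ₀ hτ₀
end
end

section
/- Assume c ≠ 0. Let ω* > 0 and τ* ≥ 0 satisfy P(iω*) = 0 at delay τ = τ*, and suppose h′(ω*²) ≠ 0. If λ : I → ℂ is a differentiable function on an open interval I containing τ*, with λ(τ*) = iω* and P(λ(τ)) = 0 for every τ ∈ I (where in P the delay parameter equals τ), then the derivative of Re λ(τ) at τ = τ* is nonzero and has the same sign as h′(ω*²). -/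
noncomputable section

/-!
Write `P(λ) = Q(λ) - R(λ) e^{-2λτ}` with `Q` the quartic and `R(λ) = E (λ + b₁)(λ + b₂)`.
Differentiating `P(λ(τ)) = 0` gives `P_λ λ' + P_τ = 0`, so `|P_λ|² Re λ' = Re (-P_τ · conj P_λ)`.
At `λ = iω` the root equation `Q = R e^{-2λτ}` and `|e^{-2iωτ}| = 1` turn the right-hand side into
`Re (2iω (R conj R' - Q conj Q'))`, which equals `2ω² h'(ω²)` because `h(ω²) = |Q(iω)|² - |R(iω)|²`.
-/

open Complex ComplexConjugate

theorem ne_zero_and_pos_iff_of_mul_eq {N x k y : ℝ} (hN : 0 ≤ N) (hk : 0 < k) (hy : y ≠ 0)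
    (h : N * x = k * y) : x ≠ 0 ∧ (0 < x ↔ 0 < y) := by
  have hNx : N * x ≠ 0 := h ▸ mul_ne_zero hk.ne' hy
  have hNpos : 0 < N := hN.lt_of_ne (left_ne_zero_of_mul hNx).symm
  refine ⟨right_ne_zero_of_mul hNx, fun hx => ?_, fun hy => ?_⟩
  · exact pos_of_mul_pos_right (h ▸ mul_pos hNpos hx) hk.le
  · exact pos_of_mul_pos_right (h.symm ▸ mul_pos hk hy) hNpos.le

theorem hasDerivAt_sub_mul_exp_comp {Q R : ℂ → ℂ} {Q' R' L : ℂ} {lam : ℝ → ℂ} {t : ℝ}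
    (hQ : HasDerivAt Q Q' (lam t)) (hR : HasDerivAt R R' (lam t)) (hlam : HasDerivAt lam L t) :
    HasDerivAt (fun s : ℝ => Q (lam s) - R (lam s) * exp (-(2 * lam s * s)))
      ((Q' - (R' - 2 * t * R (lam t)) * exp (-(2 * lam t * t))) * L
        + 2 * lam t * R (lam t) * exp (-(2 * lam t * t))) t := by
  have hexp : HasDerivAt (fun s : ℝ => exp (-(2 * lam s * s)))
      (exp (-(2 * lam t * t)) * -(2 * L * t + 2 * lam t * 1)) t :=
    (((hlam.const_mul 2).mul (ofRealCLM.hasDerivAt (x := t))).neg).cexp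
  refine ((hQ.comp t hlam).fun_sub ((hR.comp t hlam).fun_mul hexp)).congr_deriv ?_
  simp only [Function.comp_apply]
  ring

theorem normSq_mul_re_eq_of_root {q r q' r' e z L : ℂ} {τ : ℝ} (hz : z.re = 0)
    (hroot : q = r * e) (he : e * conj e = 1)
    (hlin : (q' - (r' - 2 * τ * r) * e) * L + 2 * z * r * e = 0) :
    normSq (q' - (r' - 2 * τ * r) * e) * L.re = (2 * z * (r * conj r' - q * conj q')).re := by
  set Pl := q' - (r' - 2 * τ * r) * e
  have hmul : (normSq Pl : ℂ) * L
      = 2 * z * (r * conj r' - q * conj q') - 4 * τ * normSq r * z := by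
    rw [← mul_conj, ← mul_conj]
    have hconj : conj Pl = conj q' - (conj r' - 2 * τ * conj r) * conj e := by
      simp only [Pl, map_sub, map_mul, map_ofNat, conj_ofReal]
    linear_combination conj Pl * hlin - 2 * z * r * e * hconj + 2 * z * conj q' * hroot
      + (2 * z * r * (conj r' - 2 * τ * conj r)) * he
  simpa [hz] using congrArg re hmul

theorem exp_mul_conj_exp_of_re_eq_zero {w : ℂ} (hw : w.re = 0) : exp w * conj (exp w) = 1 := by
  rw [mul_conj, normSq_eq_norm_sq, norm_exp, hw, Real.exp_zero]
  norm_num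

def charQuartic (a b₁ b₂ : ℝ) (z : ℂ) : ℂ :=
  z^4 + (cA a b₁ b₂ : ℂ)*z^3 + (cB a b₁ b₂ : ℂ)*z^2 + (cC a b₁ b₂ : ℂ)*z + (cD a b₁ b₂ : ℂ)

def charDelayCoeff (b₁ b₂ c : ℝ) (z : ℂ) : ℂ := (cE c : ℂ) * (z + (b₁:ℂ)) * (z + (b₂:ℂ))

theorem charP_eq (a b₁ b₂ c τ : ℝ) (z : ℂ) :
    charP a b₁ b₂ c τ z
      = charQuartic a b₁ b₂ z - charDelayCoeff b₁ b₂ c z * exp (-(2 * z * τ)) := rfl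

theorem hasDerivAt_charQuartic (a b₁ b₂ : ℝ) (z : ℂ) :
    HasDerivAt (charQuartic a b₁ b₂)
      (4*z^3 + 3*(cA a b₁ b₂ : ℂ)*z^2 + 2*(cB a b₁ b₂ : ℂ)*z + (cC a b₁ b₂ : ℂ)) z := by
  refine (((((hasDerivAt_pow 4 z).fun_add ((hasDerivAt_pow 3 z).const_mul _)).fun_add
    ((hasDerivAt_pow 2 z).const_mul _)).fun_add ((hasDerivAt_id' z).const_mul _)).add_const
    _).congr_deriv ?_
  norm_num
  ring

theorem hasDerivAt_charDelayCoeff (b₁ b₂ c : ℝ) (z : ℂ) :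
    HasDerivAt (charDelayCoeff b₁ b₂ c) ((cE c : ℂ) * (2*z + b₁ + b₂)) z := by
  refine ((((hasDerivAt_id' z).add_const _).const_mul _).fun_mul
    ((hasDerivAt_id' z).add_const _)).congr_deriv ?_
  ring

-- `h(ω²) = |Q(iω)|² - |R(iω)|²`; the left-hand side is `ω` times its derivative in `ω`.
theorem re_charDelayCoeff_mul_conj_sub_charQuartic_mul_conj (a b₁ b₂ c ω : ℝ) :
    (2 * (I * ω) * (charDelayCoeff b₁ b₂ c (I * ω) * conj ((cE c : ℂ) * (2*(I * ω) + b₁ + b₂))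
      - charQuartic a b₁ b₂ (I * ω) * conj (4*(I * ω)^3 + 3*(cA a b₁ b₂ : ℂ)*(I * ω)^2
          + 2*(cB a b₁ b₂ : ℂ)*(I * ω) + (cC a b₁ b₂ : ℂ)))).re
      = 2 * ω^2 * hq' a b₁ b₂ c (ω^2) := by
  simp only [charDelayCoeff, charQuartic, map_add, map_mul, map_pow, map_ofNat, conj_ofReal,
    conj_I]
  simp only [mul_re, mul_im, add_re, add_im, sub_re, sub_im, neg_re, neg_im, ofReal_re, ofReal_im,
    I_re, I_im, re_ofNat, im_ofNat, one_re, one_im, pow_succ, pow_zero]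
  simp only [hq', qP, qQ, qR]
  ring

theorem stmt_11_general (a b₁ b₂ c : ℝ)
    (ωs τs : ℝ) (hωs : 0 < ωs)
    (hroot : charP a b₁ b₂ c τs (Complex.I * (ωs:ℂ)) = 0)
    (hder : hq' a b₁ b₂ c (ωs^2) ≠ 0)
    (I : Set ℝ) (hI : IsOpen I) (hmem : τs ∈ I)
    (lam : ℝ → ℂ) (hdiff : ∀ t ∈ I, DifferentiableAt ℝ lam t)
    (hinit : lam τs = Complex.I * (ωs:ℂ))
    (hchar : ∀ t ∈ I, charP a b₁ b₂ c t (lam t) = 0) :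
    deriv (fun t => (lam t).re) τs ≠ 0 ∧
      (0 < deriv (fun t => (lam t).re) τs ↔ 0 < hq' a b₁ b₂ c (ωs^2)) := by
  have hL := (hdiff τs hmem).hasDerivAt
  have hF := hasDerivAt_sub_mul_exp_comp (hasDerivAt_charQuartic a b₁ b₂ (lam τs))
    (hasDerivAt_charDelayCoeff b₁ b₂ c (lam τs)) hL
  have hzero : (fun t : ℝ => charP a b₁ b₂ c t (lam t)) =ᶠ[nhds τs] fun _ => 0 :=
    Filter.eventually_of_mem (hI.mem_nhds hmem) hchar
  have hlin := hF.unique ((hasDerivAt_const τs (0 : ℂ)).congr_of_eventuallyEq hzero)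
  rw [hinit] at hlin
  rw [charP_eq, sub_eq_zero] at hroot
  have hmain := normSq_mul_re_eq_of_root (by simp) hroot
    (exp_mul_conj_exp_of_re_eq_zero (by simp)) hlin
  rw [re_charDelayCoeff_mul_conj_sub_charQuartic_mul_conj] at hmain
  have hderiv_re : deriv (fun t => (lam t).re) τs = (deriv lam τs).re :=
    (reCLM.hasFDerivAt.comp_hasDerivAt τs hL).deriv
  rw [hderiv_re]
  exact ne_zero_and_pos_iff_of_mul_eq (normSq_nonneg _) (by positivity) hder hmain

theorem stmt_11 (a b₁ b₂ c : ℝ) (ha : 0 < a) (hb₁ : 0 < b₁) (hb₂ : 0 < b₂)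
    (hc : c ≠ 0) (ωs τs : ℝ) (hωs : 0 < ωs) (hτs : 0 ≤ τs)
    (hroot : charP a b₁ b₂ c τs (Complex.I * (ωs:ℂ)) = 0)
    (hder : hq' a b₁ b₂ c (ωs^2) ≠ 0)
    (I : Set ℝ) (hI : IsOpen I) (hmem : τs ∈ I)
    (lam : ℝ → ℂ) (hdiff : ∀ t ∈ I, DifferentiableAt ℝ lam t)
    (hinit : lam τs = Complex.I * (ωs:ℂ))
    (hchar : ∀ t ∈ I, charP a b₁ b₂ c t (lam t) = 0) :
    deriv (fun t => (lam t).re) τs ≠ 0 ∧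
      (0 < deriv (fun t => (lam t).re) τs ↔ 0 < hq' a b₁ b₂ c (ωs^2)) :=
  stmt_11_general a b₁ b₂ c ωs τs hωs hroot hder I hI hmem lam hdiff hinit hchar
end
end

section
/- Assume c ≠ 0 and τ ≥ 0. Then λ = 0 is a root of the characteristic function P if and only if c²b₁b₂ = D; moreover, λ = 0 is a simple root (i.e., P(0) = 0 and P′(0) ≠ 0) if and only if c²b₁b₂ = D and τ ≠ (c²(b₁+b₂) − C)/(2c²b₁b₂). -/
noncomputable section

theorem charP_zero (a b₁ b₂ c τ : ℝ) :
    charP a b₁ b₂ c τ 0 = ((cD a b₁ b₂ - c ^ 2 * b₁ * b₂ : ℝ) : ℂ) := by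
  simp [charP, cE]

theorem hasDerivAt_charP (a b₁ b₂ c τ : ℝ) (z : ℂ) :
    HasDerivAt (charP a b₁ b₂ c τ)
      (4 * z ^ 3 + 3 * cA a b₁ b₂ * z ^ 2 + 2 * cB a b₁ b₂ * z + cC a b₁ b₂
        - cE c * (2 * z + b₁ + b₂ - 2 * τ * (z + b₁) * (z + b₂)) * Complex.exp (-(2 * z * τ)))
      z := by
  have hexp : HasDerivAt (fun w : ℂ => Complex.exp (-(2 * w * τ)))
      (Complex.exp (-(2 * z * τ)) * -(2 * τ)) z := by
    simpa using (((hasDerivAt_id z).const_mul (2 : ℂ)).mul_const (τ : ℂ)).neg.cexp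
  have hquad : HasDerivAt (fun w : ℂ => (cE c : ℂ) * (w + b₁) * (w + b₂))
      (cE c * (2 * z + b₁ + b₂)) z := by
    refine ((((hasDerivAt_id z).add_const (b₁ : ℂ)).const_mul (cE c : ℂ)).mul
      ((hasDerivAt_id z).add_const (b₂ : ℂ))).congr_deriv ?_
    simp only [id]; ring
  have hpoly := ((((hasDerivAt_pow 4 z).add ((hasDerivAt_pow 3 z).const_mul (cA a b₁ b₂ : ℂ))).add
    ((hasDerivAt_pow 2 z).const_mul (cB a b₁ b₂ : ℂ))).add
    ((hasDerivAt_id z).const_mul (cC a b₁ b₂ : ℂ))).add_const (cD a b₁ b₂ : ℂ)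
  refine (hpoly.sub (hquad.mul hexp)).congr_deriv ?_
  norm_num; ring

theorem deriv_charP_zero (a b₁ b₂ c τ : ℝ) :
    deriv (charP a b₁ b₂ c τ) 0 =
      ((cC a b₁ b₂ - c ^ 2 * (b₁ + b₂) + 2 * τ * c ^ 2 * b₁ * b₂ : ℝ) : ℂ) := by
  rw [(hasDerivAt_charP a b₁ b₂ c τ 0).deriv]
  push_cast [cE, mul_zero, zero_mul, neg_zero, Complex.exp_zero]
  ring

theorem stmt_12_general (a b₁ b₂ c τ : ℝ) (hb₁ : 0 < b₁) (hb₂ : 0 < b₂)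
    (hc : c ≠ 0) :
    (charP a b₁ b₂ c τ 0 = 0 ↔ c^2 * b₁ * b₂ = cD a b₁ b₂) ∧
      ((charP a b₁ b₂ c τ 0 = 0 ∧ deriv (charP a b₁ b₂ c τ) 0 ≠ 0) ↔
        (c^2 * b₁ * b₂ = cD a b₁ b₂ ∧
          τ ≠ (c^2 * (b₁+b₂) - cC a b₁ b₂) / (2 * c^2 * b₁ * b₂))) := by
  have hroot : charP a b₁ b₂ c τ 0 = 0 ↔ c ^ 2 * b₁ * b₂ = cD a b₁ b₂ := by
    rw [charP_zero, Complex.ofReal_eq_zero, sub_eq_zero, eq_comm]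
  have hsimple : deriv (charP a b₁ b₂ c τ) 0 ≠ 0 ↔
      τ ≠ (c ^ 2 * (b₁ + b₂) - cC a b₁ b₂) / (2 * c ^ 2 * b₁ * b₂) := by
    rw [deriv_charP_zero, ne_eq, Complex.ofReal_eq_zero, not_iff_not,
      eq_div_iff (by positivity)]
    constructor <;> intro h <;> linarith
  exact ⟨hroot, and_congr hroot hsimple⟩

theorem stmt_12 (a b₁ b₂ c τ : ℝ) (ha : 0 < a) (hb₁ : 0 < b₁) (hb₂ : 0 < b₂)
    (hc : c ≠ 0) (hτ : 0 ≤ τ) :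
    (charP a b₁ b₂ c τ 0 = 0 ↔ c^2 * b₁ * b₂ = cD a b₁ b₂) ∧
      ((charP a b₁ b₂ c τ 0 = 0 ∧ deriv (charP a b₁ b₂ c τ) 0 ≠ 0) ↔
        (c^2 * b₁ * b₂ = cD a b₁ b₂ ∧
          τ ≠ (c^2 * (b₁+b₂) - cC a b₁ b₂) / (2 * c^2 * b₁ * b₂))) :=
  stmt_12_general a b₁ b₂ c τ hb₁ hb₂ hc
end
end
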